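/- Let W be a row-stochastic n×n matrix, β ∈ [0,1]^n, and set W^(1) = (I−[β])W and W^(2) = [β]W (the recent-memory-influence case). Then the spectral radius of the FJ-MM block matrix Ā_d = [[0, I],[Λ W^(2), Λ W^(1)]] satisfies ρ(Ā_d) ≥ ρ(ΛW); that is, the FJ-MM model with memory converges no faster than the original FJ model with matrix W. -/

import Mathlib

open Matrix

/-- The spectral radius of a real square matrix: the supremum of the moduli of its
complex eigenvalues (elements of the spectrum of the matrix viewed over `ℂ`). -/
noncomputable def specRad {m : Type*} [Fintype m] [DecidableEq m]
    (M : Matrix m m ℝ) : ℝ :=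
  sSup ((fun z : ℂ => ‖z‖) '' spectrum ℂ (M.map Complex.ofReal))

set_option linter.unusedSectionVars false
set_option maxHeartbeats 1000000

namespace FJMMProof

open Filter Topology Finset
open scoped ENNReal NNReal

attribute [local instance] Matrix.linftyOpNormedRing Matrix.linftyOpNormedAlgebra
  Matrix.linfty_opNormOneClass

variable {n : ℕ} {m : Type*} [Fintype m] [DecidableEq m]

/-- entrywise monotone multiplication on the right -/
lemma entry_mul_le_mul {M M' B : Matrix m m ℝ} (h : ∀ i j, M i j ≤ M' i j)
    (hB : ∀ i j, 0 ≤ B i j) : ∀ i j, (M * B) i j ≤ (M' * B) i j := by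
  intro i j
  rw [Matrix.mul_apply, Matrix.mul_apply]
  exact Finset.sum_le_sum fun l _ => mul_le_mul_of_nonneg_right (h i l) (hB l j)

lemma entry_mul_nonneg {M B : Matrix m m ℝ} (hM : ∀ i j, 0 ≤ M i j)
    (hB : ∀ i j, 0 ≤ B i j) : ∀ i j, 0 ≤ (M * B) i j := by
  intro i j
  rw [Matrix.mul_apply]
  exact Finset.sum_nonneg fun l _ => mul_nonneg (hM i l) (hB l j)

lemma entry_one_nonneg : ∀ i j, (0:ℝ) ≤ (1 : Matrix m m ℝ) i j := by
  intro i j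
  rw [Matrix.one_apply]
  split <;> norm_num

lemma entry_pow_nonneg {M : Matrix m m ℝ} (hM : ∀ i j, 0 ≤ M i j) (k : ℕ) :
    ∀ i j, 0 ≤ (M ^ k) i j := by
  induction k with
  | zero => simpa using entry_one_nonneg
  | succ k ih => rw [pow_succ]; exact entry_mul_nonneg ih hM

/-- linfty operator norm is monotone wrt the entrywise order on nonnegative matrices -/
lemma norm_le_norm_of_entry_le {M N : Matrix m m ℝ} (h0 : ∀ i j, 0 ≤ M i j)
    (h : ∀ i j, M i j ≤ N i j) : ‖M‖ ≤ ‖N‖ := by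
  rw [Matrix.linfty_opNorm_def, Matrix.linfty_opNorm_def]
  refine NNReal.coe_le_coe.2 (Finset.sup_le fun i _ => le_trans ?_
    (Finset.le_sup (Finset.mem_univ i)))
  refine Finset.sum_le_sum fun j _ => ?_
  have hMN : ‖M i j‖ ≤ ‖N i j‖ := by
    rw [Real.norm_of_nonneg (h0 i j), Real.norm_of_nonneg ((h0 i j).trans (h i j))]
    exact h i j
  exact hMN

/-- the (2,2) block has norm at most the norm of the whole block matrix -/
lemma norm_block22_le (C P D Q : Matrix m m ℝ) :
    ‖Q‖ ≤ ‖fromBlocks C P D Q‖ := by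
  rw [Matrix.linfty_opNorm_def, Matrix.linfty_opNorm_def]
  refine NNReal.coe_le_coe.2 (Finset.sup_le fun i _ => le_trans ?_
    (Finset.le_sup (Finset.mem_univ (Sum.inr i))))
  have : ∑ j : m ⊕ m, ‖fromBlocks C P D Q (Sum.inr i) j‖₊
      = (∑ j : m, ‖D i j‖₊) + ∑ j : m, ‖Q i j‖₊ := by
    rw [Fintype.sum_sum_type]
    rfl
  rw [this]
  exact le_add_self

lemma nnnorm_map_ofReal (M : Matrix m m ℝ) : ‖M.map Complex.ofReal‖₊ = ‖M‖₊ := by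
  simp [Matrix.linfty_opNNNorm_def, Matrix.map_apply]

lemma norm_map_ofReal (M : Matrix m m ℝ) : ‖M.map Complex.ofReal‖ = ‖M‖ :=
  congrArg NNReal.toReal (nnnorm_map_ofReal M)

lemma map_ofReal_pow (M : Matrix m m ℝ) (k : ℕ) :
    (M.map Complex.ofReal) ^ k = (M ^ k).map Complex.ofReal := by
  have := map_pow (Complex.ofRealHom.mapMatrix (m := m)) M k
  exact this.symm




/-- word-sum matrices: `S A B t` is the sum of all products of `A`s (weight 2) and `B`s
(weight 1) of total weight `t`. -/
noncomputable def S (A B : Matrix (Fin n) (Fin n) ℝ) : ℕ → Matrix (Fin n) (Fin n) ℝ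
  | 0 => 1
  | 1 => B
  | (t+2) => B * S A B (t+1) + A * S A B t

lemma S_right (A B : Matrix (Fin n) (Fin n) ℝ) :
    ∀ t, S A B (t + 2) = S A B (t+1) * B + S A B t * A := by
  intro t
  induction t using Nat.twoStepInduction with
  | zero => simp [S]
  | one => simp [S]; noncomm_ring
  | more t ih1 ih2 =>
      show S A B (t + 2 + 2) = _
      rw [show t + 2 + 2 = (t + 3) + 1 by ring]
      calc S A B (t+4) = B * S A B (t+3) + A * S A B (t+2) := by simp [S]
        _ = B * (S A B (t+2) * B + S A B (t+1) * A) + A * (S A B (t+1) * B + S A B t * A) := by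
              rw [← ih2, ← ih1]
        _ = (B * S A B (t+2) + A * S A B (t+1)) * B + (B * S A B (t+1) + A * S A B t) * A := by
              noncomm_ring
        _ = S A B (t+3) * B + S A B (t+2) * A := by
              have h1 : S A B (t+3) = B * S A B (t+2) + A * S A B (t+1) := by simp [S]
              have h2 : S A B (t+2) = B * S A B (t+1) + A * S A B t := by simp [S]
              rw [h1, h2]

lemma S_nonneg {A B : Matrix (Fin n) (Fin n) ℝ} (hA : ∀ i j, 0 ≤ A i j)
    (hB : ∀ i j, 0 ≤ B i j) : ∀ t, ∀ i j, 0 ≤ S A B t i j := by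
  intro t
  induction t using Nat.twoStepInduction with
  | zero => simpa [S] using entry_one_nonneg
  | one => simpa [S] using hB
  | more t ih1 ih2 =>
      intro i j
      show 0 ≤ (B * S A B (t+1) + A * S A B t) i j
      have := entry_mul_nonneg hB ih2
      have := entry_mul_nonneg hA ih1
      exact add_nonneg (entry_mul_nonneg hB ih2 i j) (entry_mul_nonneg hA ih1 i j)

/-- `T A B k j` is the sum of all products of `k` factors, `j` of which are `A` and
`k - j` of which are `B`. -/
noncomputable def T (A B : Matrix (Fin n) (Fin n) ℝ) : ℕ → ℕ → Matrix (Fin n) (Fin n) ℝ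
  | 0, 0 => 1
  | 0, _+1 => 0
  | k+1, 0 => T A B k 0 * B
  | k+1, j+1 => T A B k (j+1) * B + T A B k j * A

lemma T_nonneg {A B : Matrix (Fin n) (Fin n) ℝ} (hA : ∀ i j, 0 ≤ A i j)
    (hB : ∀ i j, 0 ≤ B i j) : ∀ k j, ∀ i i', 0 ≤ T A B k j i i' := by
  intro k
  induction k with
  | zero =>
      intro j
      match j with
      | 0 => simpa [T] using entry_one_nonneg
      | j+1 => simp [T]
  | succ k ih =>
      intro j
      match j with
      | 0 => simpa [T] using entry_mul_nonneg (ih 0) hB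
      | j+1 =>
          intro i i'
          show 0 ≤ (T A B k (j+1) * B + T A B k j * A) i i'
          exact add_nonneg (entry_mul_nonneg (ih (j+1)) hB i i')
            (entry_mul_nonneg (ih j) hA i i')

lemma T_eq_zero (A B : Matrix (Fin n) (Fin n) ℝ) : ∀ k j, k < j → T A B k j = 0 := by
  intro k
  induction k with
  | zero => intro j hj; match j, hj with | j+1, _ => simp [T]
  | succ k ih =>
      intro j hj
      match j, hj with
      | j+1, hj =>
          show T A B k (j+1) * B + T A B k j * A = 0
          rw [ih (j+1) (by omega), ih j (by omega), Matrix.zero_mul, Matrix.zero_mul, add_zero]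

lemma sum_T (A B : Matrix (Fin n) (Fin n) ℝ) :
    ∀ k, ∑ j ∈ Finset.range (k+1), T A B k j = (A + B) ^ k := by
  intro k
  induction k with
  | zero => simp [T]
  | succ k ih =>
      have h3 : ∑ j ∈ Finset.range (k+1), T A B k (j+1) = (A+B)^k - T A B k 0 := by
        have h4 : ∑ j ∈ Finset.range (k+2), T A B k j
            = (∑ j ∈ Finset.range (k+1), T A B k (j+1)) + T A B k 0 :=
          Finset.sum_range_succ' _ _
        have h5 : ∑ j ∈ Finset.range (k+2), T A B k j = (A+B)^k := by
          rw [Finset.sum_range_succ, ih, T_eq_zero A B k (k+1) (by omega), add_zero]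
        rw [h5] at h4
        rw [eq_sub_iff_add_eq, ← h4]
      calc ∑ j ∈ Finset.range (k+2), T A B (k+1) j
          = (∑ j ∈ Finset.range (k+1), T A B (k+1) (j+1)) + T A B (k+1) 0 :=
            Finset.sum_range_succ' _ _
        _ = (∑ j ∈ Finset.range (k+1), (T A B k (j+1) * B + T A B k j * A)) + T A B k 0 * B := by
            rfl
        _ = (∑ j ∈ Finset.range (k+1), T A B k (j+1)) * B
            + (∑ j ∈ Finset.range (k+1), T A B k j) * A + T A B k 0 * B := by
            rw [Finset.sum_add_distrib, Finset.sum_mul, Finset.sum_mul]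
        _ = ((A+B)^k - T A B k 0) * B + (A+B)^k * A + T A B k 0 * B := by rw [h3, ih]
        _ = (A+B)^k * (A + B) := by noncomm_ring
        _ = (A+B)^(k+1) := (pow_succ _ _).symm

lemma T_le_S {A B : Matrix (Fin n) (Fin n) ℝ} (hA : ∀ i j, 0 ≤ A i j)
    (hB : ∀ i j, 0 ≤ B i j) : ∀ k j, ∀ i i', T A B k j i i' ≤ S A B (k+j) i i' := by
  intro k
  induction k with
  | zero =>
      intro j
      match j with
      | 0 => intro i i'; simp [T, S]
      | j+1 => intro i i'; simpa [T] using S_nonneg hA hB (j+1) i i'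
  | succ k ih =>
      intro j
      match j with
      | 0 =>
          intro i i'
          show (T A B k 0 * B) i i' ≤ S A B (k+1) i i'
          have h1 : (T A B k 0 * B) i i' ≤ (S A B k * B) i i' :=
            entry_mul_le_mul (fun a b => by simpa using ih 0 a b) hB i i'
          refine h1.trans ?_
          match k with
          | 0 => simp [S]
          | k+1 =>
              rw [S_right]
              have : 0 ≤ (S A B k * A) i i' :=
                entry_mul_nonneg (S_nonneg hA hB k) hA i i'
              simp only [Matrix.add_apply]
              linarith
      | j+1 =>
          intro i i'
          show (T A B k (j+1) * B + T A B k j * A) i i' ≤ S A B (k+1+(j+1)) i i'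
          have hS2 : S A B (k+1+(j+1)) = S A B (k+j+1) * B + S A B (k+j) * A := by
            have he : k+1+(j+1) = (k+j) + 2 := by omega
            rw [he, S_right]
          rw [hS2]
          have h1 : (T A B k (j+1) * B) i i' ≤ (S A B (k+(j+1)) * B) i i' :=
            entry_mul_le_mul (ih (j+1)) hB i i'
          have h2 : (T A B k j * A) i i' ≤ (S A B (k+j) * A) i i' :=
            entry_mul_le_mul (ih j) hA i i'
          simp only [Matrix.add_apply]
          have e1 : k + (j+1) = k+j+1 := by omega
          rw [e1] at h1
          linarith

lemma pow_le_sum_S {A B : Matrix (Fin n) (Fin n) ℝ} (hA : ∀ i j, 0 ≤ A i j)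
    (hB : ∀ i j, 0 ≤ B i j) (k : ℕ) :
    ∀ i i', ((A + B) ^ k) i i' ≤ (∑ j ∈ Finset.range (k+1), S A B (k+j)) i i' := by
  intro i i'
  rw [← sum_T A B k]
  simp only [Matrix.sum_apply]
  exact Finset.sum_le_sum fun j _ => T_le_S hA hB k j i i'

lemma pow_blocks (A B : Matrix (Fin n) (Fin n) ℝ) :
    ∀ t, ∃ C D, (fromBlocks 0 1 A B) ^ (t+1)
      = fromBlocks C (S A B t) D (S A B (t+1)) := by
  intro t
  induction t with
  | zero => exact ⟨0, A, by simp [S]⟩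
  | succ t ih =>
      obtain ⟨C, D, hCD⟩ := ih
      refine ⟨D, A * C + B * D, ?_⟩
      rw [pow_succ', hCD, Matrix.fromBlocks_multiply]
      have hS : S A B (t+2) = B * S A B (t+1) + A * S A B t := by simp [S]
      rw [hS]
      rw [show B * S A B (t + 1) + A * S A B t = A * S A B t + B * S A B (t + 1) from add_comm _ _]
      simp


theorem specRad_le_block (n : ℕ) (hn : 0 < n) (A B : Matrix (Fin n) (Fin n) ℝ)
    (hA : ∀ i j, 0 ≤ A i j) (hB : ∀ i j, 0 ≤ B i j)
    (hrow : ∀ i, ∑ j, (A + B) i j ≤ 1) :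
    specRad (A + B) ≤ specRad (fromBlocks 0 1 A B) := by
  haveI : Nonempty (Fin n) := ⟨⟨0, hn⟩⟩
  have hAB1 : ‖A + B‖ ≤ 1 := by
    rw [Matrix.linfty_opNorm_def]
    have hsup : ((Finset.univ : Finset (Fin n)).sup fun i => ∑ j, ‖(A+B) i j‖₊) ≤ 1 := by
      refine Finset.sup_le fun i _ => ?_
      have hnn : ∀ j, 0 ≤ (A+B) i j := fun j => add_nonneg (hA i j) (hB i j)
      have hle : ((∑ j, ‖(A+B) i j‖₊ : ℝ≥0) : ℝ) ≤ 1 := by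
        push_cast
        calc ∑ j, ‖(A+B) i j‖ = ∑ j, (A+B) i j :=
              Finset.sum_congr rfl fun j _ => Real.norm_of_nonneg (hnn j)
          _ ≤ 1 := hrow i
      exact_mod_cast hle
    exact_mod_cast hsup
  set M : Matrix (Fin n) (Fin n) ℝ := A + B with hM
  set a : Matrix (Fin n) (Fin n) ℂ := M.map Complex.ofReal with ha
  set Ab : Matrix (Fin n ⊕ Fin n) (Fin n ⊕ Fin n) ℝ := fromBlocks 0 1 A B with hAb
  set ab : Matrix (Fin n ⊕ Fin n) (Fin n ⊕ Fin n) ℂ := Ab.map Complex.ofReal with hab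
  set R : ℝ := specRad Ab with hRdef
  have hR0 : 0 ≤ R := by
    apply Real.sSup_nonneg
    rintro x ⟨z, _, rfl⟩
    exact norm_nonneg _
  have hbdd : BddAbove ((fun z : ℂ => ‖z‖) '' spectrum ℂ ab) := by
    refine ⟨‖ab‖ * ‖(1 : Matrix (Fin n ⊕ Fin n) (Fin n ⊕ Fin n) ℂ)‖, ?_⟩
    rintro x ⟨z, hz, rfl⟩
    simpa using spectrum.norm_le_norm_mul_of_mem hz
  have hr1 : specRad M ≤ 1 := by
    apply Real.sSup_le _ zero_le_one
    rintro x ⟨z, hz, rfl⟩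
    have h := spectrum.norm_le_norm_of_mem hz
    rw [← ha, norm_map_ofReal] at h
    calc ‖z‖ = ‖z‖ := rfl
      _ ≤ ‖M‖ := h
      _ ≤ 1 := hAB1
  apply le_of_forall_pos_le_add
  intro ε hε
  rcases le_or_gt 1 (R + ε) with h1 | h1
  · exact hr1.trans h1
  · set c : ℝ := R + ε with hc
    have hc0 : 0 < c := lt_of_lt_of_le hε (le_add_of_nonneg_left hR0)
    have hsr : spectralRadius ℂ ab ≤ ENNReal.ofReal R := by
      refine iSup₂_le fun z hz => ?_
      rw [← enorm_eq_nnnorm, ← ofReal_norm]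
      apply ENNReal.ofReal_le_ofReal
      calc ‖z‖ = ‖z‖ := rfl
        _ ≤ R := le_csSup hbdd (Set.mem_image_of_mem _ hz)
    have hlt : spectralRadius ℂ ab < ENNReal.ofReal c :=
      lt_of_le_of_lt hsr ((ENNReal.ofReal_lt_ofReal_iff hc0).2 (by rw [hc]; linarith))
    have hev := (spectrum.pow_nnnorm_pow_one_div_tendsto_nhds_spectralRadius ab).eventually_lt_const hlt
    obtain ⟨N, hN⟩ := Filter.eventually_atTop.1 hev
    have hpow : ∀ t, N ≤ t → 1 ≤ t → ‖Ab ^ t‖ ≤ c ^ t := by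
      intro t htN ht1
      have hlt' := hN t htN
      have ht0 : (t:ℝ) ≠ 0 := Nat.cast_ne_zero.2 (by omega)
      have h2 : ((‖ab ^ t‖₊ : ℝ≥0∞) ^ (1/(t:ℝ))) ^ (t:ℝ) ≤ (ENNReal.ofReal c) ^ (t:ℝ) :=
        ENNReal.rpow_le_rpow hlt'.le (by positivity)
      have h3 : ((‖ab ^ t‖₊ : ℝ≥0∞) ^ (1/(t:ℝ))) ^ (t:ℝ) = (‖ab ^ t‖₊ : ℝ≥0∞) := by
        rw [← ENNReal.rpow_mul, one_div_mul_cancel ht0, ENNReal.rpow_one]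
      have h4 : (ENNReal.ofReal c) ^ (t:ℝ) = ENNReal.ofReal (c ^ t) := by
        rw [ENNReal.rpow_natCast, ← ENNReal.ofReal_pow hc0.le]
      rw [h3, h4] at h2
      have h5 : ‖ab ^ t‖ ≤ c ^ t := by
        rw [← enorm_eq_nnnorm, ← ofReal_norm] at h2
        exact (ENNReal.ofReal_le_ofReal_iff (by positivity)).1 h2
      rwa [hab, map_ofReal_pow, norm_map_ofReal] at h5
    apply Real.sSup_le _ hc0.le
    rintro x ⟨z, hz, rfl⟩
    show ‖z‖ ≤ c
    by_contra hzc
    push_neg at hzc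
    set x : ℝ := ‖z‖ / c with hx
    have hx1 : 1 < x := (one_lt_div hc0).2 hzc
    set d : ℝ := Real.sqrt x - 1 with hd
    have hx0 : (0:ℝ) ≤ x := by positivity
    have hd0 : 0 < d := by
      rw [hd, sub_pos]
      rw [show (1:ℝ) = Real.sqrt 1 from (Real.sqrt_one).symm]
      exact Real.sqrt_lt_sqrt zero_le_one hx1
    obtain ⟨k0, hk0⟩ := exists_nat_ge (1/(d^2))
    set k : ℕ := max (max N 1) k0 with hk
    have hkN : N ≤ k := le_trans (le_max_left _ _) (le_max_left _ _)
    have hk1 : 1 ≤ k := le_trans (le_max_right _ _) (le_max_left _ _)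
    have hkk0 : (k0:ℝ) ≤ k := Nat.cast_le.2 (le_max_right _ _)
    -- entrywise/norm chain
    have hz_pow : ‖z‖ ^ k ≤ ((k:ℝ)+1) * c ^ k := by
      have m1 : ‖z‖ ^ k ≤ ‖a ^ k‖ := by
        have hm : z ^ k ∈ spectrum ℂ (a ^ k) :=
          spectrum.pow_image_subset (𝕜 := ℂ) a k ⟨z, hz, rfl⟩
        have h := spectrum.norm_le_norm_of_mem hm
        calc ‖z‖ ^ k = ‖z ^ k‖ := by rw [norm_pow]
          _ ≤ ‖a ^ k‖ := h
      have m2 : ‖a ^ k‖ = ‖M ^ k‖ := by rw [ha, map_ofReal_pow, norm_map_ofReal]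
      have m3 : ‖M ^ k‖ ≤ ∑ j ∈ Finset.range (k+1), ‖S A B (k+j)‖ :=
        calc ‖M ^ k‖ ≤ ‖∑ j ∈ Finset.range (k+1), S A B (k+j)‖ :=
              norm_le_norm_of_entry_le
                (entry_pow_nonneg (fun i j => add_nonneg (hA i j) (hB i j)) k)
                (pow_le_sum_S hA hB k)
          _ ≤ ∑ j ∈ Finset.range (k+1), ‖S A B (k+j)‖ := norm_sum_le _ _
      have m4 : ∀ j : ℕ, ‖S A B (k+j)‖ ≤ c ^ k := by
        intro j
        obtain ⟨u, hu⟩ : ∃ u, k + j = u + 1 := ⟨k+j-1, by omega⟩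
        obtain ⟨C, D, hCD⟩ := pow_blocks A B u
        have h6 : ‖S A B (u+1)‖ ≤ ‖Ab ^ (u+1)‖ := by
          rw [hAb, hCD]
          exact norm_block22_le _ _ _ _
        have h7 : ‖Ab ^ (u+1)‖ ≤ c ^ (u+1) := hpow (u+1) (by omega) (by omega)
        calc ‖S A B (k+j)‖ = ‖S A B (u+1)‖ := by rw [hu]
          _ ≤ c ^ (u+1) := h6.trans h7
          _ ≤ c ^ k := pow_le_pow_of_le_one hc0.le h1.le (by omega)
      calc ‖z‖ ^ k ≤ ‖M ^ k‖ := m2 ▸ m1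
        _ ≤ ∑ j ∈ Finset.range (k+1), ‖S A B (k+j)‖ := m3
        _ ≤ ∑ _j ∈ Finset.range (k+1), c ^ k := Finset.sum_le_sum fun j _ => m4 j
        _ = ((k:ℝ)+1) * c ^ k := by
            rw [Finset.sum_const, Finset.card_range, nsmul_eq_mul]
            push_cast
            ring
    -- Bernoulli-type contradiction
    have hyd : Real.sqrt x = 1 + d := by rw [hd]; ring
    have hyk : (1 + (k:ℝ) * d) ≤ (1+d) ^ k := one_add_mul_le_pow (by linarith) k
    have hxk : x ^ k = ((1+d)^k)^2 := by
      rw [← hyd, ← pow_mul, mul_comm k 2, pow_mul, Real.sq_sqrt hx0]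
    have hkd : 1 ≤ (k:ℝ) * d^2 := by
      have : 1/(d^2) ≤ (k:ℝ) := le_trans hk0 hkk0
      rw [div_le_iff₀ (by positivity)] at this
      nlinarith [sq_nonneg d]
    have hfinal : ((k:ℝ)+1) < x ^ k := by
      have h7 : (1 + (k:ℝ)*d)^2 ≤ ((1+d)^k)^2 :=
        pow_le_pow_left₀ (by positivity) hyk 2
      have hk1' : (1:ℝ) ≤ k := by exact_mod_cast hk1
      rw [hxk]
      nlinarith [hkd, hd0, hk1']
    have hcon : ((k:ℝ)+1) * c^k < x^k * c^k :=
      mul_lt_mul_of_pos_right hfinal (by positivity)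
    have hxc : x ^ k * c ^ k = ‖z‖ ^ k := by
      rw [hx, div_pow]
      field_simp
    linarith [hz_pow, hcon, hxc ▸ hcon]



lemma specRad_of_isEmpty {m : Type*} [Fintype m] [DecidableEq m] [IsEmpty m]
    (M : Matrix m m ℝ) : specRad M = 0 := by
  haveI : Subsingleton (Matrix m m ℂ) := ⟨fun a b => by ext i j; exact isEmptyElim i⟩
  have h : spectrum ℂ (M.map Complex.ofReal) = ∅ := by
    ext z
    simp [spectrum.mem_iff, isUnit_of_subsingleton]
  rw [specRad, h]
  simp [Real.sSup_empty]

end FJMMProof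

open FJMMProof in
/-- **Recent-memory FJ-MM converges no faster than the original FJ model (Corollary 2).**
With `W¹ = (I-[β])W` and `W² = [β]W` (`W` row-stochastic, `β_i ∈ [0,1]`), the block
matrix `Ā_d = [[0, I], [ΛW², ΛW¹]]` satisfies `ρ(Ā_d) ≥ ρ(ΛW)`. -/
theorem fjmm_memory_slower_than_fj
    (n : ℕ) (Λ W : Matrix (Fin n) (Fin n) ℝ) (β : Fin n → ℝ)
    (hΛdiag : ∀ i j, i ≠ j → Λ i j = 0)
    (hΛ : ∀ i, Λ i i ∈ Set.Icc (0:ℝ) 1)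
    (hβ : ∀ i, β i ∈ Set.Icc (0:ℝ) 1)
    (hWnn : ∀ i j, 0 ≤ W i j) (hWrow : ∀ i, ∑ j, W i j = 1) :
    specRad (Λ * W) ≤
      specRad (Matrix.fromBlocks (0 : Matrix (Fin n) (Fin n) ℝ) (1 : Matrix (Fin n) (Fin n) ℝ)
        (Λ * (Matrix.diagonal β * W)) (Λ * ((1 - Matrix.diagonal β) * W))) := by
  rcases Nat.eq_zero_or_pos n with hn | hn
  · subst hn
    haveI : IsEmpty (Fin 0) := by infer_instance
    haveI : IsEmpty (Fin 0 ⊕ Fin 0) := by infer_instance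
    rw [specRad_of_isEmpty, specRad_of_isEmpty]
  · set A : Matrix (Fin n) (Fin n) ℝ := Λ * (Matrix.diagonal β * W) with hA
    set B : Matrix (Fin n) (Fin n) ℝ := Λ * ((1 - Matrix.diagonal β) * W) with hB
    have hentry : ∀ (X : Matrix (Fin n) (Fin n) ℝ) i j, (Λ * X) i j = Λ i i * X i j := by
      intro X i j
      rw [Matrix.mul_apply]
      exact Finset.sum_eq_single i
        (fun l _ hl => by rw [hΛdiag i l (Ne.symm hl), zero_mul])
        (fun h => absurd (Finset.mem_univ i) h)
    have hdiag1 : (1 : Matrix (Fin n) (Fin n) ℝ) - Matrix.diagonal β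
        = Matrix.diagonal (fun i => 1 - β i) := by
      rw [← Matrix.diagonal_one, ← Matrix.diagonal_sub]
    have hAnn : ∀ i j, 0 ≤ A i j := by
      intro i j
      rw [hA, hentry, Matrix.diagonal_mul]
      exact mul_nonneg (hΛ i).1 (mul_nonneg (hβ i).1 (hWnn i j))
    have hBnn : ∀ i j, 0 ≤ B i j := by
      intro i j
      rw [hB, hentry, hdiag1, Matrix.diagonal_mul]
      exact mul_nonneg (hΛ i).1 (mul_nonneg (by linarith [(hβ i).2]) (hWnn i j))
    have hABeq : A + B = Λ * W := by
      rw [hA, hB, ← mul_add, ← add_mul, add_sub_cancel, Matrix.one_mul]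
    have hABnorm : ∀ i, ∑ j, (A + B) i j ≤ 1 := by
      intro i
      rw [hABeq]
      calc ∑ j, (Λ * W) i j = ∑ j, Λ i i * W i j :=
            Finset.sum_congr rfl fun j _ => hentry W i j
        _ = Λ i i * ∑ j, W i j := by rw [Finset.mul_sum]
        _ = Λ i i := by rw [hWrow i, mul_one]
        _ ≤ 1 := (hΛ i).2
    have := specRad_le_block n hn A B hAnn hBnn hABnorm
    rwa [hABeq] at this
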